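/- arXiv:2108.06605 — 2 statements merged into one kernel-verified Lean document; each statement's English description precedes it below -/
import Mathlib

section
/- Let ℓ ∈ {ℓ_log, ℓ_lin}, let f be the SCL objective, and let α > 0. A feasible point β* = (β₁*; β₂*) is an α-stationary point of the SCL problem if and only if for j = 1, 2: in case ‖β_j*‖₀ = s_j, (∇_{β_j} f(β*))_i = 0 for all i ∈ Γ(β_j*) and α·|(∇_{β_j} f(β*))_i| ≤ (β_j*)↓_{s_j} for all i ∉ Γ(β_j*); and in case ‖β_j*‖₀ < s_j, ∇_{β_j} f(β*) = 0. -/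
open Matrix Filter Topology Finset
open scoped RealInnerProductSpace

noncomputable section SCL

/-- the zero "norm" of a vector: the number of its nonzero entries. -/
def zeroNorm {p : ℕ} (x : EuclideanSpace ℝ (Fin p)) : ℕ :=
  {i | x i ≠ 0}.ncard

/-- the `k`-th largest entry in magnitude (`1`-indexed; junk value `0` if `k = 0` or `k > p`). -/
def kthLargestAbs {p : ℕ} (x : EuclideanSpace ℝ (Fin p)) (k : ℕ) : ℝ :=
  ((Finset.univ.val.map fun i => |x i|).sort (· ≤ ·)).getD (p - k) 0

/-- the (set-valued) Euclidean projection onto a set `S`. -/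
def projSet {m : ℕ} (S : Set (EuclideanSpace ℝ (Fin m))) (w : EuclideanSpace ℝ (Fin m)) :
    Set (EuclideanSpace ℝ (Fin m)) :=
  {u | u ∈ S ∧ ∀ v ∈ S, ‖u - w‖ ≤ ‖v - w‖}

/-- the first block `β₁` of `β = (β₁; β₂)`. -/
def part1 {p₁ p₂ : ℕ} (β : EuclideanSpace ℝ (Fin (p₁ + p₂))) : EuclideanSpace ℝ (Fin p₁) :=
  WithLp.toLp 2 (fun i => β (Fin.castAdd p₂ i))

/-- the second block `β₂` of `β = (β₁; β₂)`. -/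
def part2 {p₁ p₂ : ℕ} (β : EuclideanSpace ℝ (Fin (p₁ + p₂))) : EuclideanSpace ℝ (Fin p₂) :=
  WithLp.toLp 2 (fun i => β (Fin.natAdd p₁ i))

/-- the logistic loss `ℓ_log(β; X, y)`. -/
def ellLog {n p : ℕ} (X : Matrix (Fin n) (Fin p) ℝ) (y : Fin n → ℝ)
    (β : EuclideanSpace ℝ (Fin p)) : ℝ :=
  ∑ i, (Real.log (1 + Real.exp (X.mulVec β i)) - y i * X.mulVec β i)

/-- the linear regression loss `ℓ_lin(β; X, y)`. -/
def ellLin {n p : ℕ} (X : Matrix (Fin n) (Fin p) ℝ) (y : Fin n → ℝ)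
    (β : EuclideanSpace ℝ (Fin p)) : ℝ :=
  (1 / 2) * ∑ i, (y i - X.mulVec β i) ^ 2

/-- the SCL objective `f(β₁,β₂) = (1/n) (a ℓ₁(β₁;X,y) + b ℓ₂(β₂;Z,y) + (c/2)‖Xβ₁ − Zβ₂‖²)`,
as a function of the merged vector `β = (β₁; β₂)`. -/
def sclObj {n p₁ p₂ : ℕ}
    (ℓ₁ : Matrix (Fin n) (Fin p₁) ℝ → (Fin n → ℝ) → EuclideanSpace ℝ (Fin p₁) → ℝ)
    (ℓ₂ : Matrix (Fin n) (Fin p₂) ℝ → (Fin n → ℝ) → EuclideanSpace ℝ (Fin p₂) → ℝ)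
    (X : Matrix (Fin n) (Fin p₁) ℝ) (Z : Matrix (Fin n) (Fin p₂) ℝ) (y : Fin n → ℝ)
    (a b c : ℝ) (β : EuclideanSpace ℝ (Fin (p₁ + p₂))) : ℝ :=
  (1 / (n : ℝ)) * (a * ℓ₁ X y (part1 β) + b * ℓ₂ Z y (part2 β)
    + (c / 2) * ∑ i, (X.mulVec (part1 β) i - Z.mulVec (part2 β) i) ^ 2)

/-- the largest eigenvalue of a symmetric matrix, via the Rayleigh quotient. -/
def lambdaMax {ι : Type*} [Fintype ι] (M : Matrix ι ι ℝ) : ℝ :=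
  sSup {r | ∃ v : EuclideanSpace ℝ ι, ‖v‖ = 1 ∧ r = ∑ i, v i * M.mulVec v i}

/-- the smallest eigenvalue of a symmetric matrix, via the Rayleigh quotient. -/
def lambdaMin {ι : Type*} [Fintype ι] (M : Matrix ι ι ℝ) : ℝ :=
  sInf {r | ∃ v : EuclideanSpace ℝ ι, ‖v‖ = 1 ∧ r = ∑ i, v i * M.mulVec v i}

/-- the 2×2 block matrix `[[A, B], [C, D]]`, indexed by `Fin (p₁ + p₂)`. -/
def blockMat {p₁ p₂ : ℕ} (A : Matrix (Fin p₁) (Fin p₁) ℝ) (B : Matrix (Fin p₁) (Fin p₂) ℝ)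
    (C : Matrix (Fin p₂) (Fin p₁) ℝ) (D : Matrix (Fin p₂) (Fin p₂) ℝ) :
    Matrix (Fin (p₁ + p₂)) (Fin (p₁ + p₂)) ℝ :=
  Matrix.reindex finSumFinEquiv finSumFinEquiv (Matrix.fromBlocks A B C D)

/-- a square matrix as a continuous linear map on Euclidean space. -/
def matCLM {ι : Type*} [Fintype ι] [DecidableEq ι] (M : Matrix ι ι ℝ) :
    EuclideanSpace ℝ ι →L[ℝ] EuclideanSpace ℝ ι :=
  LinearMap.toContinuousLinearMap (Matrix.toEuclideanLin M)

/-- `A` is `s`-regular if any `s` of its columns are linearly independent. -/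
def sRegular {n p : ℕ} (A : Matrix (Fin n) (Fin p) ℝ) (s : ℕ) : Prop :=
  ∀ T : Finset (Fin p), T.card = s →
    LinearIndependent ℝ (fun j : {x // x ∈ T} => Aᵀ j.1)

/-- the feasible set `Σ = Σ_{s₁}^{p₁} × Σ_{s₂}^{p₂}` of the SCL problem, in merged form. -/
def feas (p₁ p₂ s₁ s₂ : ℕ) : Set (EuclideanSpace ℝ (Fin (p₁ + p₂))) :=
  {β | zeroNorm (part1 β) ≤ s₁ ∧ zeroNorm (part2 β) ≤ s₂}

/-- `β` is an `α`-stationary point of the SCL problem with objective `f`. -/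
def alphaStat {p₁ p₂ : ℕ} (f : EuclideanSpace ℝ (Fin (p₁ + p₂)) → ℝ) (s₁ s₂ : ℕ) (α : ℝ)
    (β : EuclideanSpace ℝ (Fin (p₁ + p₂))) : Prop :=
  part1 β ∈ projSet {v | zeroNorm v ≤ s₁} (part1 β - α • part1 (gradient f β)) ∧
  part2 β ∈ projSet {v | zeroNorm v ≤ s₂} (part2 β - α • part2 (gradient f β))

end SCL

/-! For `w = β - α ∇f(β)`, α-stationarity says that `β` is a nearest point to `w` among
`s`-sparse vectors. As `‖u - w‖² = ∑ i, (u i - w i) ^ 2`, neither resetting one coordinate of `β`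
to `w i` nor trading a support index `j` for an index `i` outside the support can bring `β`
closer to `w`; this forces `w = β` on the support (everywhere if `‖β‖₀ < s`) and
`|w i| ≤ min_j |β j| = kthLargestAbs β s` off it. Conversely, these conditions say that the support
of `β` carries `s` largest entries of `w ^ 2`, so an exchange argument shows that no `s`-sparse
`v` omits less of `∑ i, w i ^ 2` than `β` does. -/

open Function

namespace List.Pairwise

variable {α : Type*} [LinearOrder α] {L : List α} {k : ℕ} {m : α}

theorem getElem_le_of_lt_countP (hL : L.Pairwise (· ≤ ·)) (hk : k < L.length)
    (h : k < L.countP (· ≤ m)) : L[k] ≤ m := by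
  by_contra! hm
  have hdrop : (L.drop k).countP (· ≤ m) = 0 := by
    have hsorted := hL.sublist (L.drop_sublist k)
    rw [List.drop_eq_getElem_cons hk, List.pairwise_cons] at hsorted
    rw [List.drop_eq_getElem_cons hk, List.countP_eq_zero]
    simp only [List.mem_cons, decide_eq_true_eq, not_le]
    rintro a (rfl | ha)
    exacts [hm, hm.trans_le (hsorted.1 a ha)]
  have htake : (L.take k).countP (· ≤ m) ≤ k :=
    List.countP_le_length.trans (List.length_take_le _ _)
  rw [← List.take_append_drop k L, List.countP_append] at h
  omega

theorem le_getElem_of_countP_le (hL : L.Pairwise (· ≤ ·)) (hk : k < L.length)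
    (h : L.countP (· < m) ≤ k) : m ≤ L[k] := by
  by_contra! hm
  have hprefix : L.take (k + 1) = L.take k ++ [L[k]] := by
    rw [List.take_add_one, List.getElem?_eq_getElem hk, Option.toList_some]
  have htake : (L.take (k + 1)).countP (· < m) = k + 1 := by
    have hsorted := hL.sublist (L.take_sublist (k + 1))
    rw [hprefix, List.pairwise_append] at hsorted
    rw [List.countP_eq_length.mpr, List.length_take_of_le hk]
    rw [hprefix]
    simp only [List.mem_append, List.mem_singleton, decide_eq_true_eq]
    rintro a (ha | rfl)
    exacts [(hsorted.2.2 a ha _ (List.mem_singleton_self _)).trans_lt hm, hm]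
  have := (L.take_sublist (k + 1)).countP_le (p := (· < m))
  omega

end List.Pairwise

theorem Multiset.countP_sort_map {ι α : Type*} [LinearOrder α] (s : Finset ι) (f : ι → α)
    (P : α → Prop) [DecidablePred P] :
    ((s.val.map f).sort (· ≤ ·)).countP (P ·) = #{i ∈ s | P (f i)} := by
  rw [← Multiset.coe_countP, Multiset.sort_eq, Multiset.countP_map]
  rfl

theorem Finset.sum_le_sum_of_card_le {ι M : Type*} [AddCommMonoid M] [PartialOrder M]
    [IsOrderedAddMonoid M] {f : ι → M} {S T : Finset ι} {c : M} (hc : 0 ≤ c)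
    (hcard : #T ≤ #S) (hS : ∀ i ∈ S, c ≤ f i) (hT : ∀ i ∈ T, i ∉ S → f i ≤ c) :
    ∑ i ∈ T, f i ≤ ∑ i ∈ S, f i := by
  classical
  rw [← sum_inter_add_sum_sdiff T S, ← sum_inter_add_sum_sdiff S T, inter_comm]
  refine add_le_add le_rfl ?_
  calc ∑ i ∈ T \ S, f i
      ≤ #(T \ S) • c :=
        sum_le_card_nsmul _ _ _ fun i hi => hT i (mem_sdiff.mp hi).1 (mem_sdiff.mp hi).2
    _ ≤ #(S \ T) • c := nsmul_le_nsmul_left hc (card_sdiff_le_card_sdiff_iff.mpr hcard)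
    _ ≤ ∑ i ∈ S \ T, f i := card_nsmul_le_sum _ _ _ fun i hi => hS i (mem_sdiff.mp hi).1

section SparseProjection

variable {p s : ℕ} {β w : EuclideanSpace ℝ (Fin p)}

theorem zeroNorm_eq_card (x : EuclideanSpace ℝ (Fin p)) : zeroNorm x = #{i | x i ≠ 0} := by
  rw [zeroNorm, ← Set.ncard_coe_finset, Finset.coe_filter]
  simp

theorem card_zero_add_zeroNorm (x : EuclideanSpace ℝ (Fin p)) :
    #{i | x i = 0} + zeroNorm x = p := by
  rw [zeroNorm_eq_card, add_comm]
  simpa using card_filter_add_card_filter_not (s := univ) (fun i => x i ≠ 0)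

theorem kthLargestAbs_zeroNorm {x : EuclideanSpace ℝ (Fin p)} {j : Fin p} (hj : x j ≠ 0)
    (hmin : ∀ i, x i ≠ 0 → |x j| ≤ |x i|) : kthLargestAbs x (zeroNorm x) = |x j| := by
  have hsplit := card_zero_add_zeroNorm x
  have hpos : 0 < zeroNorm x := by
    rw [zeroNorm_eq_card]; exact Finset.card_pos.mpr ⟨j, by simpa using hj⟩
  set L := (univ.val.map fun i => |x i|).sort (· ≤ ·)
  have hL : L.Pairwise (· ≤ ·) := Multiset.pairwise_sort _ _
  have hk : p - zeroNorm x < L.length := by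
    rw [Multiset.length_sort, Multiset.card_map, card_val, card_univ, Fintype.card_fin]
    omega
  -- `L` lists the zeros of `x` first; the next entry is the least nonzero magnitude `|x j|`.
  have hlt : L.countP (· < |x j|) = #{i | x i = 0} := by
    rw [Multiset.countP_sort_map]
    congr 1
    ext i
    simp only [mem_filter, mem_univ, true_and]
    constructor
    · intro hi; by_contra h0; exact (hmin i h0).not_gt hi
    · intro h0; simpa [h0] using hj
  have hle : #{i | x i = 0} < L.countP (· ≤ |x j|) := by
    rw [Multiset.countP_sort_map]
    refine (card_lt_card (ssubset_insert (a := j) (by simpa using hj))).trans_le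
      (card_le_card ?_)
    intro i
    simp only [mem_insert, mem_filter, mem_univ, true_and]
    rintro (rfl | h0)
    · exact le_rfl
    · simp [h0]
  have hidx : p - zeroNorm x = #{i | x i = 0} := by omega
  rw [kthLargestAbs, List.getD_eq_getElem _ _ hk]
  simp only [hidx] at hk ⊢
  exact le_antisymm (hL.getElem_le_of_lt_countP hk hle) (hL.le_getElem_of_countP_le hk hlt.le)

theorem zeroNorm_toLp_update_le (f : Fin p → ℝ) (i : Fin p) (t : ℝ) :
    zeroNorm (WithLp.toLp 2 (update f i t)) ≤ zeroNorm (WithLp.toLp 2 f) + 1 := by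
  refine (Set.ncard_le_ncard fun k hk => ?_).trans (Set.ncard_insert_le i _)
  by_cases hki : k = i
  · exact Or.inl hki
  · exact Or.inr (by simpa [update_of_ne hki] using hk)

theorem zeroNorm_toLp_update_zero_add_one {f : Fin p → ℝ} {j : Fin p} (hj : f j ≠ 0) :
    zeroNorm (WithLp.toLp 2 (update f j 0)) + 1 = zeroNorm (WithLp.toLp 2 f) := by
  change (support (update f j 0)).ncard + 1 = (support f).ncard
  rw [support_update_zero]
  exact Set.ncard_sdiff_singleton_add_one hj

theorem norm_toLp_update_sub_sq (f : Fin p → ℝ) (w : EuclideanSpace ℝ (Fin p)) (i : Fin p)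
    (t : ℝ) : ‖WithLp.toLp 2 (update f i t) - w‖ ^ 2 =
      ‖WithLp.toLp 2 f - w‖ ^ 2 - (f i - w i) ^ 2 + (t - w i) ^ 2 := by
  simp only [EuclideanSpace.real_norm_sq_eq, PiLp.sub_apply]
  rw [Fintype.sum_eq_add_sum_compl i, Fintype.sum_eq_add_sum_compl i]
  rw [update_self, add_sub_cancel_left, add_comm]
  congr 1
  refine sum_congr rfl fun k hk => ?_
  rw [update_of_ne (by simpa using hk)]

theorem apply_eq_of_mem_projSet_sparse (h : β ∈ projSet {v | zeroNorm v ≤ s} w) {i : Fin p}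
    (hi : zeroNorm (WithLp.toLp 2 (update β.ofLp i (w i))) ≤ s) : w i = β i := by
  have hopt := pow_le_pow_left₀ (norm_nonneg _) (h.2 _ hi) 2
  rw [norm_toLp_update_sub_sq, WithLp.toLp_ofLp, sub_self] at hopt
  nlinarith [sq_nonneg (β i - w i)]

theorem abs_le_of_mem_projSet_sparse (h : β ∈ projSet {v | zeroNorm v ≤ s} w) {i j : Fin p}
    (hi : β i = 0) (hj : β j ≠ 0) (hwj : w j = β j) : |w i| ≤ |β j| := by
  have hij : i ≠ j := by rintro rfl; exact hj hi
  have hv : zeroNorm (WithLp.toLp 2 (update (update β.ofLp j 0) i (w i))) ≤ s := by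
    refine (zeroNorm_toLp_update_le _ i _).trans ?_
    rw [zeroNorm_toLp_update_zero_add_one hj]
    exact h.1
  have hopt := pow_le_pow_left₀ (norm_nonneg _) (h.2 _ hv) 2
  rw [norm_toLp_update_sub_sq, norm_toLp_update_sub_sq, WithLp.toLp_ofLp,
    update_of_ne hij, hi, hwj] at hopt
  exact sq_le_sq.mp (by linarith)

theorem mem_projSet_sparse_of_abs_le {m : ℝ} (hm : 0 ≤ m) (hβ : zeroNorm β = s)
    (hon : ∀ i, β i ≠ 0 → w i = β i) (hoff : ∀ i, β i = 0 → |w i| ≤ m)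
    (hmin : ∀ i, β i ≠ 0 → m ≤ |β i|) : β ∈ projSet {v | zeroNorm v ≤ s} w := by
  refine ⟨hβ.le, fun v hv => ?_⟩
  rw [← sq_le_sq₀ (norm_nonneg _) (norm_nonneg _), EuclideanSpace.real_norm_sq_eq,
    EuclideanSpace.real_norm_sq_eq]
  set S : Finset (Fin p) := {i | β i ≠ 0}
  set T : Finset (Fin p) := {i | v i ≠ 0}
  have hβw : ∑ i, (β - w) i ^ 2 = ∑ i ∈ Sᶜ, w i ^ 2 := by
    rw [← sum_compl_add_sum S, sum_eq_zero (s := S) fun i hi => ?_, add_zero]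
    · refine sum_congr rfl fun i hi => ?_
      rw [PiLp.sub_apply, show β i = 0 by simpa [S] using hi, zero_sub, neg_sq]
    · rw [PiLp.sub_apply, hon i (by simpa [S] using hi), sub_self, sq, zero_mul]
  have hvw : ∑ i ∈ Tᶜ, w i ^ 2 ≤ ∑ i, (v - w) i ^ 2 :=
    calc ∑ i ∈ Tᶜ, w i ^ 2 = ∑ i ∈ Tᶜ, (v - w) i ^ 2 := sum_congr rfl fun i hi => by
          rw [PiLp.sub_apply, show v i = 0 by simpa [T] using hi, zero_sub, neg_sq]
      _ ≤ ∑ i, (v - w) i ^ 2 := sum_le_univ_sum_of_nonneg fun i => sq_nonneg _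
  have hST : ∑ i ∈ T, w i ^ 2 ≤ ∑ i ∈ S, w i ^ 2 := by
    refine sum_le_sum_of_card_le (sq_nonneg m) ?_ ?_ ?_
    · rw [← zeroNorm_eq_card, ← zeroNorm_eq_card, hβ]; exact hv
    · intro i hi
      have hi : β i ≠ 0 := by simpa [S] using hi
      exact sq_le_sq.mpr (by rw [abs_of_nonneg hm, hon i hi]; exact hmin i hi)
    · intro i _ hi
      exact sq_le_sq.mpr (by rw [abs_of_nonneg hm]; exact hoff i (by simpa [S] using hi))
  have := sum_compl_add_sum S (fun i => w i ^ 2)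
  have := sum_compl_add_sum T (fun i => w i ^ 2)
  linarith

theorem mem_projSet_sparse_iff (hs : 0 < s) (hβ : zeroNorm β ≤ s) :
    β ∈ projSet {v | zeroNorm v ≤ s} w ↔
      (zeroNorm β = s →
          (∀ i, β i ≠ 0 → w i = β i) ∧ (∀ i, β i = 0 → |w i| ≤ kthLargestAbs β s)) ∧
        (zeroNorm β < s → w = β) := by
  rcases hβ.lt_or_eq with hlt | rfl
  · simp only [hlt.ne, hlt, false_imp_iff, true_imp_iff, true_and]
    refine ⟨fun h => ?_, fun hw => ?_⟩
    · ext i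
      exact apply_eq_of_mem_projSet_sparse h ((zeroNorm_toLp_update_le _ i _).trans hlt)
    · subst hw
      exact ⟨hβ, fun v _ => by simp⟩
  · obtain ⟨j, hj, hmin⟩ := exists_min_image {i | β i ≠ 0} (|β ·|)
      (card_pos.mp (zeroNorm_eq_card β ▸ hs))
    simp only [mem_filter, mem_univ, true_and] at hj hmin
    rw [kthLargestAbs_zeroNorm hj hmin]
    simp only [lt_irrefl, false_imp_iff, and_true, true_imp_iff]
    refine ⟨fun h => ?_, fun ⟨hon, hoff⟩ =>
      mem_projSet_sparse_of_abs_le (abs_nonneg _) rfl hon hoff hmin⟩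
    have hon : ∀ i, β i ≠ 0 → w i = β i := fun i hi => apply_eq_of_mem_projSet_sparse h <| by
      have := zeroNorm_toLp_update_le (update β.ofLp i 0) i (w i)
      rwa [update_idem, zeroNorm_toLp_update_zero_add_one hi] at this
    exact ⟨hon, fun i hi => abs_le_of_mem_projSet_sparse h hi hj (hon j hj)⟩

theorem mem_projSet_sparse_sub_smul_iff (hs : 0 < s) {α : ℝ} (hα : 0 < α)
    {g : EuclideanSpace ℝ (Fin p)} (hβ : zeroNorm β ≤ s) :
    β ∈ projSet {v | zeroNorm v ≤ s} (β - α • g) ↔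
      (zeroNorm β = s →
          (∀ i, β i ≠ 0 → g i = 0) ∧ (∀ i, β i = 0 → α * |g i| ≤ kthLargestAbs β s)) ∧
        (zeroNorm β < s → g = 0) := by
  have hcoord : ∀ i, (β - α • g) i = β i ↔ g i = 0 := by simp [hα.ne']
  have habs : ∀ i, β i = 0 → |(β - α • g) i| = α * |g i| := by
    intro i hi
    simp [hi, abs_mul, abs_of_pos hα]
  have hvec : β - α • g = β ↔ g = 0 := by simp [hα.ne']
  rw [mem_projSet_sparse_iff hs hβ]
  simp +contextual only [hcoord, hvec, habs]

end SparseProjection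

theorem scl_alpha_stationary_iff_general {p₁ p₂ : ℕ}
    (s₁ s₂ : ℕ) (hs₁ : 0 < s₁) (hs₂ : 0 < s₂)
    (f : EuclideanSpace ℝ (Fin (p₁ + p₂)) → ℝ)
    (α : ℝ) (hα : 0 < α)
    (βs : EuclideanSpace ℝ (Fin (p₁ + p₂)))
    (hfeas₁ : zeroNorm (part1 βs) ≤ s₁) (hfeas₂ : zeroNorm (part2 βs) ≤ s₂) :
    alphaStat f s₁ s₂ α βs ↔
      ((zeroNorm (part1 βs) = s₁ →
          (∀ i, part1 βs i ≠ 0 → part1 (gradient f βs) i = 0) ∧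
          (∀ i, part1 βs i = 0 →
            α * |part1 (gradient f βs) i| ≤ kthLargestAbs (part1 βs) s₁)) ∧
       (zeroNorm (part1 βs) < s₁ → part1 (gradient f βs) = 0) ∧
       (zeroNorm (part2 βs) = s₂ →
          (∀ i, part2 βs i ≠ 0 → part2 (gradient f βs) i = 0) ∧
          (∀ i, part2 βs i = 0 →
            α * |part2 (gradient f βs) i| ≤ kthLargestAbs (part2 βs) s₂)) ∧
       (zeroNorm (part2 βs) < s₂ → part2 (gradient f βs) = 0)) := by
  rw [alphaStat, mem_projSet_sparse_sub_smul_iff hs₁ hα hfeas₁,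
    mem_projSet_sparse_sub_smul_iff hs₂ hα hfeas₂, and_assoc]

/-- for `ℓ ∈ {ℓ_log, ℓ_lin}` and `α > 0`, a feasible point `β* = (β₁*; β₂*)` is an
`α`-stationary point of the SCL problem iff for `j = 1, 2`: when `‖β_j*‖₀ = s_j`,
`(∇_{β_j}f(β*))_i = 0` on `Γ(β_j*)` and `α|(∇_{β_j}f(β*))_i| ≤ (β_j*)↓_{s_j}` off `Γ(β_j*)`;
and when `‖β_j*‖₀ < s_j`, `∇_{β_j}f(β*) = 0`. -/
theorem scl_alpha_stationary_iff {n p₁ p₂ : ℕ} (hn : 0 < n)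
    (X : Matrix (Fin n) (Fin p₁) ℝ) (Z : Matrix (Fin n) (Fin p₂) ℝ) (y : Fin n → ℝ)
    (s₁ s₂ : ℕ) (hs₁ : 0 < s₁) (hs₁p : s₁ < p₁) (hs₂ : 0 < s₂) (hs₂p : s₂ < p₂)
    (a b c : ℝ) (ha : 0 < a) (hb : 0 < b) (hc : 0 < c)
    (ℓ₁ : Matrix (Fin n) (Fin p₁) ℝ → (Fin n → ℝ) → EuclideanSpace ℝ (Fin p₁) → ℝ)
    (ℓ₂ : Matrix (Fin n) (Fin p₂) ℝ → (Fin n → ℝ) → EuclideanSpace ℝ (Fin p₂) → ℝ)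
    (hℓ : (ℓ₁ = ellLog ∧ ℓ₂ = ellLog) ∨ (ℓ₁ = ellLin ∧ ℓ₂ = ellLin))
    (f : EuclideanSpace ℝ (Fin (p₁ + p₂)) → ℝ)
    (hf : f = sclObj ℓ₁ ℓ₂ X Z y a b c)
    (α : ℝ) (hα : 0 < α)
    (βs : EuclideanSpace ℝ (Fin (p₁ + p₂)))
    (hfeas₁ : zeroNorm (part1 βs) ≤ s₁) (hfeas₂ : zeroNorm (part2 βs) ≤ s₂) :
    alphaStat f s₁ s₂ α βs ↔
      ((zeroNorm (part1 βs) = s₁ →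
          (∀ i, part1 βs i ≠ 0 → part1 (gradient f βs) i = 0) ∧
          (∀ i, part1 βs i = 0 →
            α * |part1 (gradient f βs) i| ≤ kthLargestAbs (part1 βs) s₁)) ∧
       (zeroNorm (part1 βs) < s₁ → part1 (gradient f βs) = 0) ∧
       (zeroNorm (part2 βs) = s₂ →
          (∀ i, part2 βs i ≠ 0 → part2 (gradient f βs) i = 0) ∧
          (∀ i, part2 βs i = 0 →
            α * |part2 (gradient f βs) i| ≤ kthLargestAbs (part2 βs) s₂)) ∧
       (zeroNorm (part2 βs) < s₂ → part2 (gradient f βs) = 0)) :=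
  scl_alpha_stationary_iff_general s₁ s₂ hs₁ hs₂ f α hα βs hfeas₁ hfeas₂
end

section
/- Let ℓ ∈ {ℓ_log, ℓ_lin}, let f be the SCL objective, and let L_f be its strong smoothness parameter. (i) If β* is an α-stationary point of the SCL problem for some α > 0, then β* is a local minimizer. (ii) If moreover ‖β₁*‖₀ < s₁ and ‖β₂*‖₀ < s₂, then β* is a global minimizer. (iii) Conversely, every global minimizer of the SCL problem is an α-stationary point for every α with 0 < α < 1/L_f. -/
open Matrix Filter Topology Finset
open scoped RealInnerProductSpace

/-!
Both losses are convex, hence so is `f`, and a convex function lying below a quadratic model at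
`β` has the linear part of that model as a subgradient there: `f β + ⟪∇f β, x - β⟫ ≤ f x`.

If `β ∈ Π_{Σ_s}(β - α g)`, then `g` vanishes on every index set `T ⊇ supp β` with `|T| ≤ s`:
truncating `β - α g` to `T` gives a sparse point whose squared distance to `β - α g` falls short
of `‖α g‖²` by `α² ∑_{j ∈ T} g_j²`. Every feasible `x` near an `α`-stationary `β*` has
`supp x ⊇ supp β*`, so each gradient block vanishes on `supp x` and `⟪∇f β*, x - β*⟫ = 0`: this
is (i). If both blocks are strictly sparser than allowed, every single index can be added to the
support, so `∇f β* = 0`: this is (ii). For (iii), if a sparse `v` were strictly closer to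
`β₁* - α ∇₁f` than `β₁*`, replacing the first block of `β*` by `v` would, by the quadratic upper
bound and `α L_f < 1`, strictly decrease `f` at a feasible point.
-/

open Set Real

theorem ConvexOn.add_inner_le_of_le_quadratic {E : Type*} [NormedAddCommGroup E]
    [InnerProductSpace ℝ E] {f : E → ℝ} (hf : ConvexOn ℝ univ f) {β g : E} {L : ℝ}
    (hquad : ∀ d, f (β + d) ≤ f β + ⟪g, d⟫ + L / 2 * ‖d‖ ^ 2) (x : E) :
    f β + ⟪g, x - β⟫ ≤ f x := by
  set d := x - β
  -- convexity on the segment from `β - t • d` to `x = β + d`, together with the quadratic bound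
  -- at `β - t • d`, gives the claim up to an error of order `t`
  have hslack : ∀ t : ℝ, 0 < t → f β + ⟪g, d⟫ ≤ f x + t * (L / 2 * ‖d‖ ^ 2) := by
    intro t ht
    have hβ : (1 / (1 + t)) • (β - t • d) + (t / (1 + t)) • x = β := by
      simp only [d]; match_scalars <;> field_simp <;> ring
    have hconv := hf.2 (mem_univ (β - t • d)) (mem_univ x)
      (by positivity : (0 : ℝ) ≤ 1 / (1 + t)) (by positivity : (0 : ℝ) ≤ t / (1 + t))
      (by field_simp)
    rw [hβ, smul_eq_mul, smul_eq_mul] at hconv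
    have hconv' : (1 + t) * f β ≤ f (β - t • d) + t * f x := by
      have h1t : (0 : ℝ) < 1 + t := by linarith
      calc (1 + t) * f β ≤ (1 + t) * (1 / (1 + t) * f (β - t • d) + t / (1 + t) * f x) :=
            mul_le_mul_of_nonneg_left hconv h1t.le
        _ = f (β - t • d) + t * f x := by field_simp
    have hback := hquad (-(t • d))
    rw [← sub_eq_add_neg, inner_neg_right, real_inner_smul_right, norm_neg, norm_smul,
      Real.norm_of_nonneg ht.le] at hback
    have : t * (f β + ⟪g, d⟫) ≤ t * (f x + t * (L / 2 * ‖d‖ ^ 2)) := by nlinarith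
    exact le_of_mul_le_mul_left this ht
  have hlim : Tendsto (fun t : ℝ => f x + t * (L / 2 * ‖d‖ ^ 2)) (𝓝[>] 0) (𝓝 (f x)) := by
    have : Continuous (fun t : ℝ => f x + t * (L / 2 * ‖d‖ ^ 2)) := by fun_prop
    simpa using (this.tendsto 0).mono_left nhdsWithin_le_nhds
  exact ge_of_tendsto hlim (eventually_nhdsWithin_of_forall hslack)

lemma convexOn_log_one_add_exp_sub_mul (y : ℝ) :
    ConvexOn ℝ univ (fun t => log (1 + exp t) - y * t) := by
  have hderiv (t : ℝ) :
      HasDerivAt (fun t => log (1 + exp t) - y * t) (exp t / (1 + exp t) - y) t := by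
    have := (((hasDerivAt_exp t).const_add 1).log (by positivity)).sub
      ((hasDerivAt_id t).const_mul y)
    simp only [Pi.sub_def, id, mul_one] at this
    exact this
  refine Monotone.convexOn_univ_of_deriv (fun t => (hderiv t).differentiableAt) ?_
  rw [funext fun t => (hderiv t).deriv]
  intro s t hst
  rw [sub_le_sub_iff_right, div_le_div_iff₀ (by positivity) (by positivity)]
  nlinarith [exp_le_exp.2 hst]

lemma convexOn_sq_sub_div_two (y : ℝ) : ConvexOn ℝ univ (fun t => (y - t) ^ 2 / 2) := by
  have hderiv (t : ℝ) : HasDerivAt (fun t => (y - t) ^ 2 / 2) (t - y) t :=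
    ((((hasDerivAt_id' t).const_sub y).fun_pow 2).div_const 2).congr_deriv (by ring)
  refine Monotone.convexOn_univ_of_deriv (fun t => (hderiv t).differentiableAt) ?_
  rw [funext fun t => (hderiv t).deriv]
  exact fun s t hst => by simpa using hst

lemma convexOn_finset_sum {E ι : Type*} [AddCommGroup E] [Module ℝ E] {t : Set E}
    (ht : Convex ℝ t) (s : Finset ι) {f : ι → E → ℝ} (hf : ∀ i ∈ s, ConvexOn ℝ t (f i)) :
    ConvexOn ℝ t (fun x => ∑ i ∈ s, f i x) := by
  classical
  induction s using Finset.induction_on with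
  | empty => simp only [Finset.sum_empty]; exact convexOn_const 0 ht
  | insert i s hi ih =>
    simp only [Finset.sum_insert hi]
    exact (hf i (Finset.mem_insert_self i s)).add
      (ih fun j hj => hf j (Finset.mem_insert_of_mem hj))

lemma convexOn_sum_comp_linearMap {E ι : Type*} [AddCommGroup E] [Module ℝ E] [Fintype ι]
    {h : ι → ℝ → ℝ} (hh : ∀ i, ConvexOn ℝ univ (h i)) (A : E →ₗ[ℝ] ι → ℝ) :
    ConvexOn ℝ univ (fun x => ∑ i, h i (A x i)) :=
  convexOn_finset_sum convex_univ _ fun i _ =>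
    (hh i).comp_linearMap (LinearMap.proj (R := ℝ) (φ := fun _ : ι => ℝ) i ∘ₗ A)

lemma convexOn_ellLog {n p : ℕ} (X : Matrix (Fin n) (Fin p) ℝ) (y : Fin n → ℝ) :
    ConvexOn ℝ univ (ellLog X y) :=
  convexOn_sum_comp_linearMap (fun i => convexOn_log_one_add_exp_sub_mul (y i))
    (X.mulVecLin ∘ₗ (WithLp.linearEquiv 2 ℝ (Fin p → ℝ)).toLinearMap)

lemma convexOn_ellLin {n p : ℕ} (X : Matrix (Fin n) (Fin p) ℝ) (y : Fin n → ℝ) :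
    ConvexOn ℝ univ (ellLin X y) := by
  have hsum : ellLin X y = fun β : EuclideanSpace ℝ (Fin p) => ∑ i, (y i - (X *ᵥ β) i) ^ 2 / 2 := by
    funext β
    simp only [ellLin, Finset.mul_sum, div_eq_inv_mul, mul_one]
  rw [hsum]
  exact convexOn_sum_comp_linearMap (fun i => convexOn_sq_sub_div_two (y i))
    (X.mulVecLin ∘ₗ (WithLp.linearEquiv 2 ℝ (Fin p → ℝ)).toLinearMap)

section Blocks

variable {p₁ p₂ : ℕ}

def part1ₗ : EuclideanSpace ℝ (Fin (p₁ + p₂)) →ₗ[ℝ] EuclideanSpace ℝ (Fin p₁) where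
  toFun := part1
  map_add' _ _ := rfl
  map_smul' _ _ := rfl

def part2ₗ : EuclideanSpace ℝ (Fin (p₁ + p₂)) →ₗ[ℝ] EuclideanSpace ℝ (Fin p₂) where
  toFun := part2
  map_add' _ _ := rfl
  map_smul' _ _ := rfl

lemma part1_sub (x y : EuclideanSpace ℝ (Fin (p₁ + p₂))) : part1 (x - y) = part1 x - part1 y :=
  map_sub part1ₗ x y

lemma part2_sub (x y : EuclideanSpace ℝ (Fin (p₁ + p₂))) : part2 (x - y) = part2 x - part2 y :=
  map_sub part2ₗ x y

lemma part1_add (x y : EuclideanSpace ℝ (Fin (p₁ + p₂))) : part1 (x + y) = part1 x + part1 y :=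
  map_add part1ₗ x y

lemma part2_add (x y : EuclideanSpace ℝ (Fin (p₁ + p₂))) : part2 (x + y) = part2 x + part2 y :=
  map_add part2ₗ x y

lemma continuous_part1 : Continuous (part1 : EuclideanSpace ℝ (Fin (p₁ + p₂)) → _) :=
  LinearMap.continuous_of_finiteDimensional part1ₗ

lemma continuous_part2 : Continuous (part2 : EuclideanSpace ℝ (Fin (p₁ + p₂)) → _) :=
  LinearMap.continuous_of_finiteDimensional part2ₗ

def mergeVec (u : EuclideanSpace ℝ (Fin p₁)) (v : EuclideanSpace ℝ (Fin p₂)) :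
    EuclideanSpace ℝ (Fin (p₁ + p₂)) :=
  WithLp.toLp 2 (Fin.append u v)

@[simp] lemma part1_mergeVec (u : EuclideanSpace ℝ (Fin p₁)) (v : EuclideanSpace ℝ (Fin p₂)) :
    part1 (mergeVec u v) = u := by
  ext i; simp [part1, mergeVec]

@[simp] lemma part2_mergeVec (u : EuclideanSpace ℝ (Fin p₁)) (v : EuclideanSpace ℝ (Fin p₂)) :
    part2 (mergeVec u v) = v := by
  ext i; simp [part2, mergeVec]

lemma inner_eq_inner_part1_add_inner_part2 (x y : EuclideanSpace ℝ (Fin (p₁ + p₂))) :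
    ⟪x, y⟫ = ⟪part1 x, part1 y⟫ + ⟪part2 x, part2 y⟫ := by
  simp only [EuclideanSpace.inner_eq_star_dotProduct, dotProduct, Fin.sum_univ_add]
  rfl

lemma norm_sq_eq_norm_sq_part1_add_norm_sq_part2 (x : EuclideanSpace ℝ (Fin (p₁ + p₂))) :
    ‖x‖ ^ 2 = ‖part1 x‖ ^ 2 + ‖part2 x‖ ^ 2 := by
  simp only [← real_inner_self_eq_norm_sq, inner_eq_inner_part1_add_inner_part2 x x]

end Blocks

lemma convexOn_sclObj {n p₁ p₂ : ℕ}
    {ℓ₁ : Matrix (Fin n) (Fin p₁) ℝ → (Fin n → ℝ) → EuclideanSpace ℝ (Fin p₁) → ℝ}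
    {ℓ₂ : Matrix (Fin n) (Fin p₂) ℝ → (Fin n → ℝ) → EuclideanSpace ℝ (Fin p₂) → ℝ}
    {X : Matrix (Fin n) (Fin p₁) ℝ} {Z : Matrix (Fin n) (Fin p₂) ℝ} {y : Fin n → ℝ}
    (h₁ : ConvexOn ℝ univ (ℓ₁ X y)) (h₂ : ConvexOn ℝ univ (ℓ₂ Z y))
    {a b c : ℝ} (ha : 0 ≤ a) (hb : 0 ≤ b) (hc : 0 ≤ c) :
    ConvexOn ℝ univ (sclObj ℓ₁ ℓ₂ X Z y a b c) := by
  let ofLpₗ {p : ℕ} := (WithLp.linearEquiv 2 ℝ (Fin p → ℝ)).toLinearMap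
  have hcoupling := convexOn_sum_comp_linearMap (fun _ => Even.convexOn_pow even_two)
    (X.mulVecLin ∘ₗ ofLpₗ ∘ₗ part1ₗ - Z.mulVecLin ∘ₗ ofLpₗ ∘ₗ part2ₗ)
  exact ((((h₁.comp_linearMap part1ₗ).smul ha).add ((h₂.comp_linearMap part2ₗ).smul hb)).add
    (hcoupling.smul (by positivity : (0 : ℝ) ≤ c / 2))).smul (by positivity : (0 : ℝ) ≤ 1 / (n : ℝ))

section Sparse

variable {p s : ℕ}

noncomputable def supportFinset (x : EuclideanSpace ℝ (Fin p)) : Finset (Fin p) := {i | x i ≠ 0}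

@[simp] lemma mem_supportFinset {x : EuclideanSpace ℝ (Fin p)} {i : Fin p} :
    i ∈ supportFinset x ↔ x i ≠ 0 := by
  simp [supportFinset]

lemma zeroNorm_eq_card_supportFinset (x : EuclideanSpace ℝ (Fin p)) :
    zeroNorm x = (supportFinset x).card := by
  rw [zeroNorm, ← Set.ncard_coe_finset]
  congr 1
  ext i
  simp

lemma eventually_supportFinset_subset (x : EuclideanSpace ℝ (Fin p)) :
    ∀ᶠ u in 𝓝 x, supportFinset x ⊆ supportFinset u := by
  have h : ∀ᶠ u in 𝓝 x, ∀ i, x i ≠ 0 → u i ≠ 0 := eventually_all.2 fun i => by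
    by_cases hi : x i = 0
    · simp [hi]
    · filter_upwards [(PiLp.continuous_apply 2 _ i).continuousAt.eventually_ne hi] with u hu
      exact fun _ => hu
  filter_upwards [h] with u hu i
  simpa using hu i

variable {α : ℝ} {β g : EuclideanSpace ℝ (Fin p)}

lemma eq_zero_of_mem_projSet (hα : α ≠ 0) (hstat : β ∈ projSet {v | zeroNorm v ≤ s} (β - α • g))
    {T : Finset (Fin p)} (hT : supportFinset β ⊆ T) (hTs : T.card ≤ s) :
    ∀ j ∈ T, g j = 0 := by
  classical
  set w := β - α • g
  let v : EuclideanSpace ℝ (Fin p) := WithLp.toLp 2 fun j => if j ∈ T then w j else 0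
  have hv : zeroNorm v ≤ s := by
    rw [zeroNorm_eq_card_supportFinset]
    refine (Finset.card_le_card fun j hj => ?_).trans hTs
    by_contra hjT
    simp [v, hjT] at hj
  have hsq : ‖β - w‖ ^ 2 ≤ ‖v - w‖ ^ 2 := pow_le_pow_left₀ (norm_nonneg _) (hstat.2 v hv) 2
  have hβw (j : Fin p) : (β - w) j = α * g j := by simp [w]
  have hvw (j : Fin p) : (v - w) j = if j ∈ T then 0 else α * g j := by
    by_cases hj : j ∈ T
    · simp [v, hj]
    · have hβj : β j = 0 := by simpa using mt (@hT j) hj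
      simp [v, w, hj, hβj]
  simp only [EuclideanSpace.real_norm_sq_eq, hβw, hvw] at hsq
  have hsplit : ∑ j, (α * g j) ^ 2 = ∑ j, (if j ∈ T then α * g j else 0) ^ 2
      + ∑ j, (if j ∈ T then 0 else α * g j) ^ 2 := by
    rw [← Finset.sum_add_distrib]
    congr 1
    ext j
    split_ifs <;> ring
  have hzero : ∑ j, (if j ∈ T then α * g j else 0) ^ 2 = 0 :=
    le_antisymm (by linarith) (by positivity)
  intro j hj
  simpa [hj, hα] using
    (Finset.sum_eq_zero_iff_of_nonneg fun _ _ => sq_nonneg _).1 hzero j (Finset.mem_univ j)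

lemma inner_sub_eq_zero_of_mem_projSet (hα : α ≠ 0)
    (hstat : β ∈ projSet {v | zeroNorm v ≤ s} (β - α • g)) {x : EuclideanSpace ℝ (Fin p)}
    (hx : zeroNorm x ≤ s) (hsupp : supportFinset β ⊆ supportFinset x) : ⟪g, x - β⟫ = 0 := by
  have hg := eq_zero_of_mem_projSet hα hstat hsupp (zeroNorm_eq_card_supportFinset x ▸ hx)
  rw [PiLp.inner_apply]
  refine Finset.sum_eq_zero fun j _ => ?_
  by_cases hj : j ∈ supportFinset x
  · rw [hg j hj, inner_zero_left]
  · have hβj : β j = 0 := by simpa using mt (@hsupp j) hj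
    have hxj : x j = 0 := by simpa using hj
    simp [hxj, hβj]

lemma eq_zero_of_mem_projSet_of_zeroNorm_lt (hα : α ≠ 0)
    (hstat : β ∈ projSet {v | zeroNorm v ≤ s} (β - α • g)) (hlt : zeroNorm β < s) : g = 0 := by
  classical
  ext j
  refine eq_zero_of_mem_projSet hα hstat (Finset.subset_insert j _) ?_ j
    (Finset.mem_insert_self j _)
  rw [zeroNorm_eq_card_supportFinset] at hlt
  exact (Finset.card_insert_le _ _).trans hlt

end Sparse

lemma mem_projSet_sub_smul {m : ℕ} {S : Set (EuclideanSpace ℝ (Fin m))}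
    {u g : EuclideanSpace ℝ (Fin m)} {L α : ℝ} (hu : u ∈ S)
    (hfirst : ∀ v ∈ S, 0 ≤ ⟪g, v - u⟫ + L / 2 * ‖v - u‖ ^ 2) (hα : 0 ≤ α) (hαL : α * L ≤ 1) :
    u ∈ projSet S (u - α • g) := by
  refine ⟨hu, fun v hv => ?_⟩
  have hsq : ‖α • g‖ ^ 2 ≤ ‖v - (u - α • g)‖ ^ 2 := by
    rw [show v - (u - α • g) = (v - u) + α • g by abel, norm_add_sq_real, real_inner_smul_right,
      real_inner_comm]
    nlinarith [mul_le_mul_of_nonneg_left (hfirst v hv) hα,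
      mul_nonneg (sub_nonneg.2 hαL) (sq_nonneg ‖v - u‖)]
  rw [sub_sub_cancel]
  exact (pow_le_pow_iff_left₀ (norm_nonneg _) (norm_nonneg _) two_ne_zero).1 hsq

section Stationarity

variable {p₁ p₂ s₁ s₂ : ℕ} {f : EuclideanSpace ℝ (Fin (p₁ + p₂)) → ℝ}
  {β : EuclideanSpace ℝ (Fin (p₁ + p₂))} {α : ℝ}

lemma isLocalMinOn_of_alphaStat (hsub : ∀ x, f β + ⟪gradient f β, x - β⟫ ≤ f x) (hα : α ≠ 0)
    (hstat : alphaStat f s₁ s₂ α β) : IsLocalMinOn f (feas p₁ p₂ s₁ s₂) β := by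
  have h₁ := (continuous_part1.tendsto β).eventually (eventually_supportFinset_subset (part1 β))
  have h₂ := (continuous_part2.tendsto β).eventually (eventually_supportFinset_subset (part2 β))
  filter_upwards [self_mem_nhdsWithin, nhdsWithin_le_nhds h₁, nhdsWithin_le_nhds h₂]
    with x hx hsupp₁ hsupp₂
  have hinner : ⟪gradient f β, x - β⟫ = 0 := by
    rw [inner_eq_inner_part1_add_inner_part2, part1_sub, part2_sub,
      inner_sub_eq_zero_of_mem_projSet hα hstat.1 hx.1 hsupp₁,
      inner_sub_eq_zero_of_mem_projSet hα hstat.2 hx.2 hsupp₂, add_zero]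
  linarith [hsub x]

lemma le_of_alphaStat_of_zeroNorm_lt (hsub : ∀ x, f β + ⟪gradient f β, x - β⟫ ≤ f x)
    (hα : α ≠ 0) (hstat : alphaStat f s₁ s₂ α β) (h₁ : zeroNorm (part1 β) < s₁)
    (h₂ : zeroNorm (part2 β) < s₂) (x : EuclideanSpace ℝ (Fin (p₁ + p₂))) : f β ≤ f x := by
  have hinner : ⟪gradient f β, x - β⟫ = 0 := by
    rw [inner_eq_inner_part1_add_inner_part2,
      eq_zero_of_mem_projSet_of_zeroNorm_lt hα hstat.1 h₁,
      eq_zero_of_mem_projSet_of_zeroNorm_lt hα hstat.2 h₂, inner_zero_left, inner_zero_left,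
      add_zero]
  linarith [hsub x]

lemma alphaStat_of_isMinOn {L : ℝ} (hβ : β ∈ feas p₁ p₂ s₁ s₂)
    (hmin : IsMinOn f (feas p₁ p₂ s₁ s₂) β)
    (hquad : ∀ d, f (β + d) ≤ f β + ⟪gradient f β, d⟫ + L / 2 * ‖d‖ ^ 2) (hα : 0 ≤ α)
    (hαL : α * L ≤ 1) : alphaStat f s₁ s₂ α β := by
  have hfirst (u w) (hd : β + mergeVec u w ∈ feas p₁ p₂ s₁ s₂) :
      0 ≤ ⟪part1 (gradient f β), u⟫ + ⟪part2 (gradient f β), w⟫ + L / 2 * (‖u‖ ^ 2 + ‖w‖ ^ 2) := by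
    have := hquad (mergeVec u w)
    rw [inner_eq_inner_part1_add_inner_part2, norm_sq_eq_norm_sq_part1_add_norm_sq_part2,
      part1_mergeVec, part2_mergeVec] at this
    linarith [isMinOn_iff.1 hmin _ hd]
  constructor
  · refine mem_projSet_sub_smul hβ.1 (fun v hv => ?_) hα hαL
    simpa using hfirst (v - part1 β) 0 ⟨by simpa [part1_add] using hv,
      by simpa [part2_add] using hβ.2⟩
  · refine mem_projSet_sub_smul hβ.2 (fun v hv => ?_) hα hαL
    simpa using hfirst 0 (v - part2 β) ⟨by simpa [part1_add] using hβ.1,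
      by simpa [part2_add] using hv⟩

end Stationarity

theorem scl_stationary_vs_minimizers_general {n p₁ p₂ : ℕ}
    (X : Matrix (Fin n) (Fin p₁) ℝ) (Z : Matrix (Fin n) (Fin p₂) ℝ) (y : Fin n → ℝ)
    (s₁ s₂ : ℕ)
    (a b c : ℝ) (ha : 0 < a) (hb : 0 < b) (hc : 0 < c)
    (ℓ₁ : Matrix (Fin n) (Fin p₁) ℝ → (Fin n → ℝ) → EuclideanSpace ℝ (Fin p₁) → ℝ)
    (ℓ₂ : Matrix (Fin n) (Fin p₂) ℝ → (Fin n → ℝ) → EuclideanSpace ℝ (Fin p₂) → ℝ)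
    (hℓ : (ℓ₁ = ellLog ∧ ℓ₂ = ellLog) ∨ (ℓ₁ = ellLin ∧ ℓ₂ = ellLin))
    (f : EuclideanSpace ℝ (Fin (p₁ + p₂)) → ℝ)
    (hf : f = sclObj ℓ₁ ℓ₂ X Z y a b c)
    (Lf : ℝ) (hLfpos : 0 < Lf)
    (hsmooth : ∀ β d : EuclideanSpace ℝ (Fin (p₁ + p₂)),
      f (β + d) ≤ f β + ⟪gradient f β, d⟫ + Lf / 2 * ‖d‖ ^ 2) :
    (∀ (βs : EuclideanSpace ℝ (Fin (p₁ + p₂))) (α : ℝ), 0 < α →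
      alphaStat f s₁ s₂ α βs → IsLocalMinOn f (feas p₁ p₂ s₁ s₂) βs) ∧
    (∀ (βs : EuclideanSpace ℝ (Fin (p₁ + p₂))) (α : ℝ), 0 < α →
      alphaStat f s₁ s₂ α βs →
      zeroNorm (part1 βs) < s₁ → zeroNorm (part2 βs) < s₂ →
      ∀ β ∈ feas p₁ p₂ s₁ s₂, f βs ≤ f β) ∧
    (∀ βs ∈ feas p₁ p₂ s₁ s₂, (∀ β ∈ feas p₁ p₂ s₁ s₂, f βs ≤ f β) →
      ∀ α : ℝ, 0 < α → α < 1 / Lf → alphaStat f s₁ s₂ α βs) := by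
  have hconv : ConvexOn ℝ univ f := by
    rcases hℓ with ⟨rfl, rfl⟩ | ⟨rfl, rfl⟩ <;> rw [hf]
    · exact convexOn_sclObj (convexOn_ellLog X y) (convexOn_ellLog Z y) ha.le hb.le hc.le
    · exact convexOn_sclObj (convexOn_ellLin X y) (convexOn_ellLin Z y) ha.le hb.le hc.le
  have hsub (β x : EuclideanSpace ℝ (Fin (p₁ + p₂))) : f β + ⟪gradient f β, x - β⟫ ≤ f x :=
    hconv.add_inner_le_of_le_quadratic (hsmooth β) x
  refine ⟨fun βs α hα hstat => isLocalMinOn_of_alphaStat (hsub βs) hα.ne' hstat,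
    fun βs α hα hstat h₁ h₂ β _ => le_of_alphaStat_of_zeroNorm_lt (hsub βs) hα.ne' hstat h₁ h₂ β,
    fun βs hβs hmin α hα hαL => alphaStat_of_isMinOn hβs (isMinOn_iff.2 hmin) (hsmooth βs) hα.le
      ((lt_div_iff₀ hLfpos).1 hαL).le⟩

/-- for `ℓ ∈ {ℓ_log, ℓ_lin}` with strong smoothness parameter `L_f`:
(i) every `α`-stationary point (`α > 0`) is a local minimizer;
(ii) if moreover `‖β₁*‖₀ < s₁` and `‖β₂*‖₀ < s₂`, it is a global minimizer;
(iii) every global minimizer is an `α`-stationary point for each `0 < α < 1/L_f`. -/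
theorem scl_stationary_vs_minimizers {n p₁ p₂ : ℕ} (hn : 0 < n)
    (X : Matrix (Fin n) (Fin p₁) ℝ) (Z : Matrix (Fin n) (Fin p₂) ℝ) (y : Fin n → ℝ)
    (s₁ s₂ : ℕ) (hs₁ : 0 < s₁) (hs₁p : s₁ < p₁) (hs₂ : 0 < s₂) (hs₂p : s₂ < p₂)
    (a b c : ℝ) (ha : 0 < a) (hb : 0 < b) (hc : 0 < c)
    (ℓ₁ : Matrix (Fin n) (Fin p₁) ℝ → (Fin n → ℝ) → EuclideanSpace ℝ (Fin p₁) → ℝ)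
    (ℓ₂ : Matrix (Fin n) (Fin p₂) ℝ → (Fin n → ℝ) → EuclideanSpace ℝ (Fin p₂) → ℝ)
    (hℓ : (ℓ₁ = ellLog ∧ ℓ₂ = ellLog) ∨ (ℓ₁ = ellLin ∧ ℓ₂ = ellLin))
    (f : EuclideanSpace ℝ (Fin (p₁ + p₂)) → ℝ)
    (hf : f = sclObj ℓ₁ ℓ₂ X Z y a b c)
    (Lf : ℝ) (hLfpos : 0 < Lf)
    (hsmooth : ∀ β d : EuclideanSpace ℝ (Fin (p₁ + p₂)),
      f (β + d) ≤ f β + ⟪gradient f β, d⟫ + Lf / 2 * ‖d‖ ^ 2) :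
    (∀ (βs : EuclideanSpace ℝ (Fin (p₁ + p₂))) (α : ℝ), 0 < α →
      alphaStat f s₁ s₂ α βs → IsLocalMinOn f (feas p₁ p₂ s₁ s₂) βs) ∧
    (∀ (βs : EuclideanSpace ℝ (Fin (p₁ + p₂))) (α : ℝ), 0 < α →
      alphaStat f s₁ s₂ α βs →
      zeroNorm (part1 βs) < s₁ → zeroNorm (part2 βs) < s₂ →
      ∀ β ∈ feas p₁ p₂ s₁ s₂, f βs ≤ f β) ∧
    (∀ βs ∈ feas p₁ p₂ s₁ s₂, (∀ β ∈ feas p₁ p₂ s₁ s₂, f βs ≤ f β) →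
      ∀ α : ℝ, 0 < α → α < 1 / Lf → alphaStat f s₁ s₂ α βs) :=
  scl_stationary_vs_minimizers_general X Z y s₁ s₂ a b c ha hb hc ℓ₁ ℓ₂ hℓ f hf Lf hLfpos hsmooth
end
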